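/- Let A and B be commutative rings and let g₁, …, g_n : A → B be ring homomorphisms (n ≥ 1). Then the pointwise product g : A → B, x ↦ g₁(x)·g₂(x)⋯g_n(x), is a multiplicative polynomial map of degree ≤ n. -/

import Mathlib

/-- Auxiliary inductive definition: `IsPolyDegAux n P` says that `P` is a polynomial map of
degree `≤ n - 1` (so `IsPolyDegAux 0 P` means `P = 0`, i.e. degree `≤ -1`). -/
def IsPolyDegAux {A : Type*} [AddCommMonoid A] {B : Type*} [AddCommGroup B] :
    ℕ → (A → B) → Prop
  | 0 => fun P => ∀ x, P x = 0
  | n + 1 => fun P => ∀ x : A, IsPolyDegAux n (fun y => P (x + y) - P y)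

/-- `P : A → B` is a polynomial map of degree `≤ n`, for an integer `n ≥ -1`. -/
def IsPolyMapOfDegLE {A : Type*} [AddCommMonoid A] {B : Type*} [AddCommGroup B]
    (n : ℤ) (P : A → B) : Prop :=
  IsPolyDegAux (n + 1).toNat P

/-- A map between commutative rings is multiplicative if it sends `1` to `1` and
products to products. -/
def IsMultiplicativeMap {A : Type*} [CommRing A] {B : Type*} [CommRing B]
    (P : A → B) : Prop :=
  P 1 = 1 ∧ ∀ x y : A, P (x * y) = P x * P y

/-!
For an additive map `h` the product rule `Δₓ (h * P) = h x * P (x + ·) + h * Δₓ P` shows that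
multiplying by `h` raises the degree of a polynomial map by at most one. Starting from the
constant `1`, of degree `≤ 0`, the product of `n` ring homomorphisms therefore has degree `≤ n`.
-/

theorem isPolyDegAux_one_const {A B : Type*} [AddCommMonoid A] [AddCommGroup B] (c : B) :
    IsPolyDegAux 1 (fun _ : A => c) :=
  fun _ _ => sub_self c

namespace IsPolyDegAux

variable {A : Type*} [AddCommMonoid A]

section AddCommGroup

variable {B : Type*} [AddCommGroup B]

theorem add {n : ℕ} {P Q : A → B} (hP : IsPolyDegAux n P) (hQ : IsPolyDegAux n Q) :
    IsPolyDegAux n (fun y => P y + Q y) := by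
  induction n generalizing P Q with
  | zero => intro y; simp only [hP y, hQ y, add_zero]
  | succ n ih =>
    intro x
    convert ih (hP x) (hQ x) using 1
    funext y
    exact add_sub_add_comm _ _ _ _

theorem comp_add_left {n : ℕ} {P : A → B} (hP : IsPolyDegAux n P) (x : A) :
    IsPolyDegAux n (fun y => P (x + y)) := by
  induction n generalizing P with
  | zero => intro y; exact hP (x + y)
  | succ n ih =>
    intro z
    convert ih (hP z) using 1
    funext y
    rw [add_left_comm]

end AddCommGroup

section Ring

variable {B : Type*} [Ring B]

theorem const_mul {n : ℕ} {P : A → B} (hP : IsPolyDegAux n P) (c : B) :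
    IsPolyDegAux n (fun y => c * P y) := by
  induction n generalizing P with
  | zero => intro y; simp only [hP y, mul_zero]
  | succ n ih =>
    intro x
    convert ih (hP x) using 1
    funext y
    rw [mul_sub]

theorem addMonoidHom_mul {n : ℕ} {P : A → B} (hP : IsPolyDegAux n P) (h : A →+ B) :
    IsPolyDegAux (n + 1) (fun y => h y * P y) := by
  induction n generalizing P with
  | zero =>
    intro x y
    show h (x + y) * P (x + y) - h y * P y = 0
    rw [hP (x + y), hP y, mul_zero, mul_zero, sub_self]
  | succ n ih =>
    intro x
    have product_rule : (fun y => h (x + y) * P (x + y) - h y * P y) =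
        fun y => h x * P (x + y) + h y * (P (x + y) - P y) := by
      funext y
      rw [map_add, add_mul, mul_sub]
      abel
    rw [product_rule]
    exact ((hP.comp_add_left x).const_mul (h x)).add (ih (hP x))

end Ring

theorem prod_addMonoidHom {B ι : Type*} [CommRing B] (g : ι → A →+ B) (s : Finset ι) :
    IsPolyDegAux (s.card + 1) (fun y => ∏ i ∈ s, g i y) := by
  classical
  induction s using Finset.induction_on with
  | empty => simpa only [Finset.prod_empty, Finset.card_empty, zero_add] using
      isPolyDegAux_one_const (1 : B)
  | insert a s ha ih =>
    simp only [Finset.prod_insert ha, Finset.card_insert_of_notMem ha]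
    exact ih.addMonoidHom_mul (g a)

end IsPolyDegAux

theorem isMultiplicativeMap_prod_ringHom {A B ι : Type*} [CommRing A] [CommRing B] [Fintype ι]
    (g : ι → A →+* B) : IsMultiplicativeMap (fun x => ∏ i, g i x) :=
  ⟨by simp only [map_one, Finset.prod_const_one],
    fun x y => by simp only [map_mul, Finset.prod_mul_distrib]⟩

theorem isPolyMapOfDegLE_prod_ringHom_general {A : Type*} [CommRing A] {B : Type*} [CommRing B]
    (n : ℕ) (g : Fin n → (A →+* B)) :
    IsPolyMapOfDegLE (n : ℤ) (fun x => ∏ i, g i x) ∧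
      IsMultiplicativeMap (fun x => ∏ i, g i x) := by
  refine ⟨?_, isMultiplicativeMap_prod_ringHom g⟩
  have hdeg := IsPolyDegAux.prod_addMonoidHom (fun i => (g i).toAddMonoidHom) Finset.univ
  rw [Finset.card_univ, Fintype.card_fin] at hdeg
  rwa [IsPolyMapOfDegLE, show ((n : ℤ) + 1).toNat = n + 1 by omega]

/-- The pointwise product of `n ≥ 1` ring homomorphisms `g₁, …, gₙ : A → B` between
commutative rings is a multiplicative polynomial map of degree `≤ n`. -/
theorem isPolyMapOfDegLE_prod_ringHom {A : Type*} [CommRing A] {B : Type*} [CommRing B]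
    (n : ℕ) (hn : 1 ≤ n) (g : Fin n → (A →+* B)) :
    IsPolyMapOfDegLE (n : ℤ) (fun x => ∏ i, g i x) ∧
      IsMultiplicativeMap (fun x => ∏ i, g i x) :=
  isPolyMapOfDegLE_prod_ringHom_general n g
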